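/- Let F be a field, h ∈ F[x] nonzero, and regard A_h ⊆ A₁ via ŷ = yh. Then A_h = ⊕_{i≥0} F[x]·hⁱ·yⁱ as a left F[x]-module; that is, an element ∑ rᵢyⁱ of A₁ (rᵢ ∈ F[x]) lies in A_h if and only if hⁱ divides rᵢ for all i. -/

import Mathlib

open Polynomial FreeAlgebra

/-- The defining relation of the Weyl algebra: `y * x = x * y + 1`. -/
inductive weylRel (F : Type) [Field F] : FreeAlgebra F (Fin 2) → FreeAlgebra F (Fin 2) → Prop
  | rel : weylRel F (ι F 1 * ι F 0) (ι F 0 * ι F 1 + 1)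

/-- The Weyl algebra `A₁` over `F`. -/
noncomputable abbrev Weyl (F : Type) [Field F] := RingQuot (weylRel F)

/-- The generator `x` of the Weyl algebra. -/
noncomputable def wX (F : Type) [Field F] : Weyl F := RingQuot.mkAlgHom F (weylRel F) (ι F 0)

/-- The generator `y` of the Weyl algebra. -/
noncomputable def wY (F : Type) [Field F] : Weyl F := RingQuot.mkAlgHom F (weylRel F) (ι F 1)

/-- The subalgebra `A_h = F⟨x, yh⟩` of the Weyl algebra. -/
noncomputable def Ahsub (F : Type) [Field F] (h : F[X]) : Subalgebra F (Weyl F) :=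
  Algebra.adjoin F {wX F, wY F * aeval (wX F) h}

namespace Stmt3Aux

variable (F : Type) [Field F]

/-- The module `F[x] ⊗ F⟨e_i⟩` on which the Weyl algebra acts, mimicking left
multiplication on the basis `x^a y^i`. -/
abbrev M := ℕ →₀ F[X]

/-- Scalar multiplication by polynomials as an algebra map. -/
noncomputable def L : F[X] →ₐ[F] Module.End F (M F) := Algebra.lsmul F F (M F)

lemma L_apply (p : F[X]) (m : M F) : L F p m = p • m := rfl

/-- The action of `y`. -/
noncomputable def Yop : Module.End F (M F) :=
  Finsupp.lsum F fun i => (Finsupp.lsingle (i+1) : F[X] →ₗ[F] M F) +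
    (Finsupp.lsingle i : F[X] →ₗ[F] M F) ∘ₗ (derivative : F[X] →ₗ[F] F[X])

lemma Yop_single (i : ℕ) (p : F[X]) :
    Yop F (Finsupp.single i p) = Finsupp.single (i+1) p + Finsupp.single i (derivative p) := by
  simp [Yop]

lemma rel_holds : Yop F * L F X = L F X * Yop F + 1 := by
  refine Finsupp.lhom_ext fun i p => ?_
  show Yop F (L F X (Finsupp.single i p)) =
    L F X (Yop F (Finsupp.single i p)) + Finsupp.single i p
  rw [L_apply, Finsupp.smul_single, smul_eq_mul, Yop_single, Yop_single, L_apply, smul_add,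
    Finsupp.smul_single, Finsupp.smul_single, smul_eq_mul, smul_eq_mul, derivative_mul,
    derivative_X, add_assoc, ← Finsupp.single_add]
  congr 2
  ring

/-- The representation of the Weyl algebra on `M`. -/
noncomputable def ρ : Weyl F →ₐ[F] Module.End F (M F) :=
  RingQuot.liftAlgHom F ⟨FreeAlgebra.lift F ![L F X, Yop F], by
    rintro _ _ ⟨⟩
    simp only [map_mul, map_add, map_one, FreeAlgebra.lift_ι_apply]
    show Yop F * L F X = L F X * Yop F + 1
    exact rel_holds F⟩

lemma ρ_wX : ρ F (wX F) = L F X := by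
  rw [wX, ρ, RingQuot.liftAlgHom_mkAlgHom_apply, FreeAlgebra.lift_ι_apply]
  rfl

lemma ρ_wY : ρ F (wY F) = Yop F := by
  rw [wY, ρ, RingQuot.liftAlgHom_mkAlgHom_apply, FreeAlgebra.lift_ι_apply]
  rfl

lemma ρ_aeval (p : F[X]) : ρ F (aeval (wX F) p) = L F p := by
  rw [← aeval_algHom_apply, ρ_wX, aeval_algHom_apply, aeval_X_left_apply]

variable (h : F[X])

/-- The submodule of elements with `i`-th coefficient divisible by `hⁱ`. -/
def N : Submodule F (M F) where
  carrier := {m | ∀ i, h ^ i ∣ m i}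
  add_mem' := fun ha hb i => by
    rw [Finsupp.add_apply]; exact dvd_add (ha i) (hb i)
  zero_mem' := fun i => by simp
  smul_mem' := fun c m hm i => by
    rw [Finsupp.smul_apply, Polynomial.smul_eq_C_mul]
    exact Dvd.dvd.mul_left (hm i) _

lemma single_mem_N {i : ℕ} {p : F[X]} (hp : h ^ i ∣ p) : Finsupp.single i p ∈ N F h := by
  intro j
  rw [Finsupp.single_apply]
  split
  · next heq => exact heq ▸ hp
  · exact dvd_zero _

lemma mem_N_apply {m : M F} (hm : m ∈ N F h) (i : ℕ) : h ^ i ∣ m i := hm i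

lemma X_inv {m : M F} (hm : m ∈ N F h) : L F X m ∈ N F h := by
  intro i
  rw [L_apply, Finsupp.smul_apply, smul_eq_mul]
  exact Dvd.dvd.mul_left (hm i) _

lemma dvd_derivative {i : ℕ} {p : F[X]} (hp : h ^ i ∣ p) : h ^ i ∣ derivative (h * p) := by
  obtain ⟨q, rfl⟩ := hp
  have : h * (h ^ i * q) = h ^ (i+1) * q := by ring
  rw [this]
  have hder : derivative (h ^ (i+1) * q) =
      h ^ i * (C ((i:F) + 1) * derivative h * q + h * derivative q) := by
    rw [derivative_mul, derivative_pow_succ]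
    ring
  rw [hder]
  exact Dvd.intro _ rfl

lemma Y_inv {m : M F} (hm : m ∈ N F h) : Yop F (L F h m) ∈ N F h := by
  have hrw : Yop F (L F h m) = m.sum fun i p => Yop F (Finsupp.single i (h * p)) := by
    rw [L_apply]
    conv_lhs => rw [← Finsupp.sum_single m, Finsupp.smul_sum]
    rw [map_finsuppSum]
    simp [Finsupp.smul_single, smul_eq_mul]
  rw [hrw]
  refine Submodule.sum_mem _ fun i _ => ?_
  show Yop F (Finsupp.single i (h * m i)) ∈ N F h
  rw [Yop_single]
  refine add_mem (single_mem_N F h ?_) (single_mem_N F h ?_)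
  · rw [pow_succ']
    exact mul_dvd_mul_left h (hm i)
  · exact dvd_derivative F h (hm i)

lemma invariance {w : Weyl F} (hw : w ∈ Ahsub F h) :
    ∀ m ∈ N F h, ρ F w m ∈ N F h := by
  induction hw using Algebra.adjoin_induction with
  | mem x hx =>
    rcases hx with hx | hx
    · subst hx
      intro m hm
      rw [ρ_wX]
      exact X_inv F h hm
    · rcases hx with rfl
      intro m hm
      rw [map_mul, ρ_wY, ρ_aeval]
      exact Y_inv F h (m := m) hm
  | algebraMap r =>
    intro m hm
    rw [AlgHom.commutes, Module.algebraMap_end_apply]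
    exact Submodule.smul_mem _ _ hm
  | add x y hx hy ihx ihy =>
    intro m hm
    rw [map_add, LinearMap.add_apply]
    exact add_mem (ihx m hm) (ihy m hm)
  | mul x y hx hy ihx ihy =>
    intro m hm
    rw [map_mul, Module.End.mul_apply]
    exact ihx _ (ihy m hm)

lemma Ypow (i : ℕ) : (Yop F ^ i) (Finsupp.single 0 (1 : F[X])) = Finsupp.single i 1 := by
  induction i with
  | zero => simp
  | succ i ih =>
    rw [pow_succ', Module.End.mul_apply, ih, Yop_single]
    simp

lemma eval_elem (n : ℕ) (r : ℕ → F[X]) :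
    ρ F (∑ i ∈ Finset.range n, aeval (wX F) (r i) * wY F ^ i) (Finsupp.single 0 (1 : F[X])) =
      ∑ i ∈ Finset.range n, Finsupp.single i (r i) := by
  rw [map_sum, LinearMap.sum_apply]
  refine Finset.sum_congr rfl fun i _ => ?_
  rw [map_mul, map_pow, ρ_aeval, ρ_wY, Module.End.mul_apply, Ypow, L_apply,
    Finsupp.smul_single, smul_eq_mul, mul_one]

-- backward direction helpers

lemma base_rel : wY F * wX F = wX F * wY F + 1 := by
  have := RingQuot.mkAlgHom_rel F (weylRel.rel (F := F))
  simpa only [map_mul, map_add, map_one, wX, wY] using this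

lemma comm (p : F[X]) :
    wY F * aeval (wX F) p = aeval (wX F) p * wY F + aeval (wX F) (derivative p) := by
  induction p using Polynomial.induction_on with
  | C a => simp [Algebra.commutes]
  | add p q hp hq =>
    rw [map_add, mul_add, hp, hq, derivative_add, map_add]
    noncomm_ring
  | monomial n a ih =>
    have key : (C a * X ^ (n + 1) : F[X]) = (C a * X ^ n) * X := by ring
    rw [key, map_mul, aeval_X, ← mul_assoc, ih, add_mul,
      derivative_mul (f := C a * X ^ n) (g := X), derivative_X, mul_one, map_add,
      map_mul (aeval (wX F)) (derivative (C a * X ^ n)) X, aeval_X,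
      mul_assoc (aeval (wX F) (C a * X ^ n)), base_rel]
    noncomm_ring

lemma wX_mem : wX F ∈ Ahsub F h :=
  Algebra.subset_adjoin (by simp)

lemma gen_mem : wY F * aeval (wX F) h ∈ Ahsub F h :=
  Algebra.subset_adjoin (by simp)

lemma aeval_mem (p : F[X]) : aeval (wX F) p ∈ Ahsub F h := by
  have : aeval (wX F) p = (Ahsub F h).val (aeval (⟨wX F, wX_mem F h⟩ : Ahsub F h) p) := by
    rw [← aeval_algHom_apply]
    rfl
  rw [this]
  exact SetLike.coe_mem _

lemma hy_pow : ∀ i : ℕ, aeval (wX F) h ^ i * wY F ^ i ∈ Ahsub F h := by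
  intro i
  induction i with
  | zero => simpa using one_mem _
  | succ i ih =>
    have key : (wY F * aeval (wX F) h) * (aeval (wX F) h ^ i * wY F ^ i) =
        aeval (wX F) h ^ (i+1) * wY F ^ (i+1)
          + aeval (wX F) (derivative (h ^ (i+1))) * wY F ^ i :=
      calc (wY F * aeval (wX F) h) * (aeval (wX F) h ^ i * wY F ^ i)
          = (wY F * aeval (wX F) (h ^ (i+1))) * wY F ^ i := by
            rw [map_pow, pow_succ' (aeval (wX F) h) i]; noncomm_ring
        _ = (aeval (wX F) (h ^ (i+1)) * wY F + aeval (wX F) (derivative (h ^ (i+1))))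
              * wY F ^ i := by rw [comm]
        _ = aeval (wX F) h ^ (i+1) * wY F ^ (i+1)
              + aeval (wX F) (derivative (h ^ (i+1))) * wY F ^ i := by
            rw [map_pow, pow_succ' (wY F) i]; noncomm_ring
    rw [eq_sub_of_add_eq key.symm]
    refine sub_mem (mul_mem (gen_mem F h) ih) ?_
    have hd : derivative (h ^ (i+1)) = (C ((i:F)+1) * derivative h) * h ^ i := by
      rw [derivative_pow_succ]; ring
    rw [hd, map_mul, map_pow, mul_assoc]
    exact mul_mem (aeval_mem F h _) ih

lemma mem_of_dvd {i : ℕ} {r : F[X]} (hr : h ^ i ∣ r) :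
    aeval (wX F) r * wY F ^ i ∈ Ahsub F h := by
  obtain ⟨q, rfl⟩ := hr
  rw [mul_comm, map_mul, map_pow, mul_assoc]
  exact mul_mem (aeval_mem F h _) (hy_pow F h i)

end Stmt3Aux

open Stmt3Aux in
/-- `A_h = ⊕_{i≥0} F[x]·hⁱ·yⁱ`: an element `∑ rᵢ yⁱ` of the Weyl algebra lies in the
subalgebra `A_h = F⟨x, yh⟩` if and only if `hⁱ` divides `rᵢ` for all `i`. -/
theorem stmt3 (F : Type) [Field F] (h : F[X]) (hh : h ≠ 0) (n : ℕ) (r : ℕ → F[X]) :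
    (∑ i ∈ Finset.range n, aeval (wX F) (r i) * wY F ^ i) ∈ Ahsub F h ↔
      ∀ i < n, h ^ i ∣ r i := by
  constructor
  · intro hw i hi
    have h0 : Finsupp.single 0 (1 : F[X]) ∈ N F h :=
      single_mem_N F h (by simp)
    have := invariance F h hw _ h0 i
    rw [eval_elem] at this
    have hcoe : (∑ j ∈ Finset.range n, Finsupp.single j (r j)) i = r i := by
      rw [Finset.sum_apply']
      simp [Finsupp.single_apply, hi]
    rwa [hcoe] at this
  · intro hdvd
    exact Subalgebra.sum_mem _ fun i hi => mem_of_dvd F h (hdvd i (Finset.mem_range.mp hi))
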